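/- Let A ≥ 3 and s ≥ 1 be integers, let i, j ∈ {1, …, A}, set z_i = 100i + 1 and z_j = 100j + 1, and let t_1, t_2 be integers with 2sA + 1 ≤ t_1, t_2 ≤ 2s(A+1) − 1. If z_i · t_2 = z_j · t_1 (equivalently, z_i/(z_i + t_1) = z_j/(z_j + t_2)), then i = j and t_1 = t_2. -/
import Mathlib

lemma key_aux (A s a b u v : ℕ) (hab : a < b) (hbA : b ≤ A)
    (hu : 2 * s * A + 1 ≤ u) (hu' : u + 1 ≤ 2 * s * (A + 1))
    (hv : 2 * s * A + 1 ≤ v) (hv' : v + 1 ≤ 2 * s * (A + 1))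
    (hvv : (100 * a + 1) * v = (100 * b + 1) * u) : False := by
  have hAv : A * v < (A + 1) * u := by nlinarith
  have hbig : (100 * a + 101) * u ≤ (100 * a + 1) * v := by nlinarith
  have ha : 100 * a + 1 < 100 * A := by omega
  nlinarith [Nat.mul_le_mul_left (A) hbig, hAv]

/-- For `A ≥ 3`, `s ≥ 1`, `i, j ∈ {1, …, A}`, `z_i = 100i+1`,
`z_j = 100j+1` and `t₁, t₂ ∈ {2sA+1, …, 2s(A+1)−1}`, if `z_i·t₂ = z_j·t₁` then `i = j`
and `t₁ = t₂`. -/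
theorem ratio_determines_activity (A s i j t₁ t₂ : ℕ)
    (hA : 3 ≤ A) (hs : 1 ≤ s)
    (hi1 : 1 ≤ i) (hiA : i ≤ A) (hj1 : 1 ≤ j) (hjA : j ≤ A)
    (ht₁l : 2 * s * A + 1 ≤ t₁) (ht₁u : t₁ ≤ 2 * s * (A + 1) - 1)
    (ht₂l : 2 * s * A + 1 ≤ t₂) (ht₂u : t₂ ≤ 2 * s * (A + 1) - 1)
    (heq : (100 * i + 1) * t₂ = (100 * j + 1) * t₁) :
    i = j ∧ t₁ = t₂ := by
  have hsA : 1 ≤ 2 * s * (A + 1) := by nlinarith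
  have h1 : t₁ + 1 ≤ 2 * s * (A + 1) := by omega
  have h2 : t₂ + 1 ≤ 2 * s * (A + 1) := by omega
  have hij : i = j := by
    rcases lt_trichotomy i j with h | h | h
    · exact absurd (key_aux A s i j t₁ t₂ h hjA ht₁l h1 ht₂l h2 heq) id
    · exact h
    · exact absurd (key_aux A s j i t₂ t₁ h hiA ht₂l h2 ht₁l h1 heq.symm) id
  subst hij
  refine ⟨rfl, ?_⟩
  have := Nat.eq_of_mul_eq_mul_left (show 0 < 100 * i + 1 by omega) heq
  omega
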